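/- In a category C with pullbacks, the pentagon identity holds for the span associators: for composable spans E ← U → D ← T → C ← S → B ← R → A, the composite of associators (1 * a) ∘ a ∘ (a * 1) around the pentagon from (((UT)S)R) to (U(T(SR))) equals the composite of the two remaining associators, i.e., a ∘ a = (1 * a) ∘ a ∘ (a * 1) as morphisms between the iterated pullbacks. -/
import Mathlib


open CategoryTheory CategoryTheory.Limits

/-- The pentagon identity for the span associators: for composable spans
`E ← U → D ← T → C ← S → B ← R → A`, the composite `(1_U * a_{RST}) ∘ a_{R,TS,U} ∘ (a_{STU} * 1_R)`
of associators from `((UT)S)R` to `U(T(SR))` equals the composite `a_{SR,T,U} ∘ a_{R,S,UT}`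
of the two remaining associators, each associator and induced morphism being characterized by
its compatibility with the pullback projections. -/
theorem statement15 {𝒞 : Type*} [Category 𝒞] [HasPullbacks 𝒞]
    {A B Cc D E R S T U : 𝒞}
    (p : R ⟶ A) (q : R ⟶ B) (r : S ⟶ B) (s : S ⟶ Cc)
    (t : T ⟶ Cc) (u : T ⟶ D) (v : U ⟶ D) (w : U ⟶ E)
    -- associator `aSTU : (UT)S ⟶ U(TS)`
    (aSTU : pullback s (pullback.fst u v ≫ t) ⟶ pullback (pullback.snd s t ≫ u) v)
    (hSTU1 : aSTU ≫ pullback.fst (pullback.snd s t ≫ u) v ≫ pullback.fst s t =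
      pullback.fst s (pullback.fst u v ≫ t))
    (hSTU2 : aSTU ≫ pullback.fst (pullback.snd s t ≫ u) v ≫ pullback.snd s t =
      pullback.snd s (pullback.fst u v ≫ t) ≫ pullback.fst u v)
    (hSTU3 : aSTU ≫ pullback.snd (pullback.snd s t ≫ u) v =
      pullback.snd s (pullback.fst u v ≫ t) ≫ pullback.snd u v)
    -- associator `aRST : (TS)R ⟶ T(SR)`
    (aRST : pullback q (pullback.fst s t ≫ r) ⟶ pullback (pullback.snd q r ≫ s) t)
    (hRST1 : aRST ≫ pullback.fst (pullback.snd q r ≫ s) t ≫ pullback.fst q r =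
      pullback.fst q (pullback.fst s t ≫ r))
    (hRST2 : aRST ≫ pullback.fst (pullback.snd q r ≫ s) t ≫ pullback.snd q r =
      pullback.snd q (pullback.fst s t ≫ r) ≫ pullback.fst s t)
    (hRST3 : aRST ≫ pullback.snd (pullback.snd q r ≫ s) t =
      pullback.snd q (pullback.fst s t ≫ r) ≫ pullback.snd s t)
    -- `e1 = aSTU * 1_R : ((UT)S)R ⟶ (U(TS))R`
    (e1 : pullback q (pullback.fst s (pullback.fst u v ≫ t) ≫ r) ⟶
      pullback q (pullback.fst (pullback.snd s t ≫ u) v ≫ (pullback.fst s t ≫ r)))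
    (he11 : e1 ≫ pullback.fst q (pullback.fst (pullback.snd s t ≫ u) v ≫ (pullback.fst s t ≫ r)) =
      pullback.fst q (pullback.fst s (pullback.fst u v ≫ t) ≫ r))
    (he12 : e1 ≫ pullback.snd q (pullback.fst (pullback.snd s t ≫ u) v ≫ (pullback.fst s t ≫ r)) =
      pullback.snd q (pullback.fst s (pullback.fst u v ≫ t) ≫ r) ≫ aSTU)
    -- `e2 : (U(TS))R ⟶ U((TS)R)`, the associator for `R`, `TS`, `U`
    (e2 : pullback q (pullback.fst (pullback.snd s t ≫ u) v ≫ (pullback.fst s t ≫ r)) ⟶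
      pullback (pullback.snd q (pullback.fst s t ≫ r) ≫ (pullback.snd s t ≫ u)) v)
    (he21 : e2 ≫ pullback.fst (pullback.snd q (pullback.fst s t ≫ r) ≫ (pullback.snd s t ≫ u)) v ≫
        pullback.fst q (pullback.fst s t ≫ r) =
      pullback.fst q (pullback.fst (pullback.snd s t ≫ u) v ≫ (pullback.fst s t ≫ r)))
    (he22 : e2 ≫ pullback.fst (pullback.snd q (pullback.fst s t ≫ r) ≫ (pullback.snd s t ≫ u)) v ≫
        pullback.snd q (pullback.fst s t ≫ r) =
      pullback.snd q (pullback.fst (pullback.snd s t ≫ u) v ≫ (pullback.fst s t ≫ r)) ≫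
        pullback.fst (pullback.snd s t ≫ u) v)
    (he23 : e2 ≫ pullback.snd (pullback.snd q (pullback.fst s t ≫ r) ≫ (pullback.snd s t ≫ u)) v =
      pullback.snd q (pullback.fst (pullback.snd s t ≫ u) v ≫ (pullback.fst s t ≫ r)) ≫
        pullback.snd (pullback.snd s t ≫ u) v)
    -- `e3 = 1_U * aRST : U((TS)R) ⟶ U(T(SR))`
    (e3 : pullback (pullback.snd q (pullback.fst s t ≫ r) ≫ (pullback.snd s t ≫ u)) v ⟶
      pullback (pullback.snd (pullback.snd q r ≫ s) t ≫ u) v)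
    (he31 : e3 ≫ pullback.fst (pullback.snd (pullback.snd q r ≫ s) t ≫ u) v =
      pullback.fst (pullback.snd q (pullback.fst s t ≫ r) ≫ (pullback.snd s t ≫ u)) v ≫ aRST)
    (he32 : e3 ≫ pullback.snd (pullback.snd (pullback.snd q r ≫ s) t ≫ u) v =
      pullback.snd (pullback.snd q (pullback.fst s t ≫ r) ≫ (pullback.snd s t ≫ u)) v)
    -- `e4 : ((UT)S)R ⟶ (UT)(SR)`, the associator for `R`, `S`, `UT`
    (e4 : pullback q (pullback.fst s (pullback.fst u v ≫ t) ≫ r) ⟶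
      pullback (pullback.snd q r ≫ s) (pullback.fst u v ≫ t))
    (he41 : e4 ≫ pullback.fst (pullback.snd q r ≫ s) (pullback.fst u v ≫ t) ≫ pullback.fst q r =
      pullback.fst q (pullback.fst s (pullback.fst u v ≫ t) ≫ r))
    (he42 : e4 ≫ pullback.fst (pullback.snd q r ≫ s) (pullback.fst u v ≫ t) ≫ pullback.snd q r =
      pullback.snd q (pullback.fst s (pullback.fst u v ≫ t) ≫ r) ≫
        pullback.fst s (pullback.fst u v ≫ t))
    (he43 : e4 ≫ pullback.snd (pullback.snd q r ≫ s) (pullback.fst u v ≫ t) =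
      pullback.snd q (pullback.fst s (pullback.fst u v ≫ t) ≫ r) ≫
        pullback.snd s (pullback.fst u v ≫ t))
    -- `e5 : (UT)(SR) ⟶ U(T(SR))`, the associator for `SR`, `T`, `U`
    (e5 : pullback (pullback.snd q r ≫ s) (pullback.fst u v ≫ t) ⟶
      pullback (pullback.snd (pullback.snd q r ≫ s) t ≫ u) v)
    (he51 : e5 ≫ pullback.fst (pullback.snd (pullback.snd q r ≫ s) t ≫ u) v ≫
        pullback.fst (pullback.snd q r ≫ s) t =
      pullback.fst (pullback.snd q r ≫ s) (pullback.fst u v ≫ t))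
    (he52 : e5 ≫ pullback.fst (pullback.snd (pullback.snd q r ≫ s) t ≫ u) v ≫
        pullback.snd (pullback.snd q r ≫ s) t =
      pullback.snd (pullback.snd q r ≫ s) (pullback.fst u v ≫ t) ≫ pullback.fst u v)
    (he53 : e5 ≫ pullback.snd (pullback.snd (pullback.snd q r ≫ s) t ≫ u) v =
      pullback.snd (pullback.snd q r ≫ s) (pullback.fst u v ≫ t) ≫ pullback.snd u v) :
    e4 ≫ e5 = e1 ≫ e2 ≫ e3 := by
  apply pullback.hom_ext
  · apply pullback.hom_ext
    · apply pullback.hom_ext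
      · simp only [Category.assoc, reassoc_of% he51, reassoc_of% he41, reassoc_of% hRST1,
          reassoc_of% he31, reassoc_of% he21, reassoc_of% he11, reassoc_of% hSTU1,
          reassoc_of% he12, reassoc_of% he22, reassoc_of% he23, reassoc_of% hRST2,
          reassoc_of% hRST3, reassoc_of% he42, reassoc_of% he43, reassoc_of% hSTU2,
          reassoc_of% hSTU3, reassoc_of% he52, reassoc_of% he53, reassoc_of% he32,
          he11, he12, he21, he22, he23, he31, he32, he41, he42, he43, he51, he52, he53,
          hSTU1, hSTU2, hSTU3, hRST1, hRST2, hRST3]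
      · simp only [Category.assoc, reassoc_of% he51, reassoc_of% he41, reassoc_of% hRST1,
          reassoc_of% he31, reassoc_of% he21, reassoc_of% he11, reassoc_of% hSTU1,
          reassoc_of% he12, reassoc_of% he22, reassoc_of% he23, reassoc_of% hRST2,
          reassoc_of% hRST3, reassoc_of% he42, reassoc_of% he43, reassoc_of% hSTU2,
          reassoc_of% hSTU3, reassoc_of% he52, reassoc_of% he53, reassoc_of% he32,
          he11, he12, he21, he22, he23, he31, he32, he41, he42, he43, he51, he52, he53,
          hSTU1, hSTU2, hSTU3, hRST1, hRST2, hRST3]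
    · simp only [Category.assoc, reassoc_of% he51, reassoc_of% he41, reassoc_of% hRST1,
        reassoc_of% he31, reassoc_of% he21, reassoc_of% he11, reassoc_of% hSTU1,
        reassoc_of% he12, reassoc_of% he22, reassoc_of% he23, reassoc_of% hRST2,
        reassoc_of% hRST3, reassoc_of% he42, reassoc_of% he43, reassoc_of% hSTU2,
        reassoc_of% hSTU3, reassoc_of% he52, reassoc_of% he53, reassoc_of% he32,
          he11, he12, he21, he22, he23, he31, he32, he41, he42, he43, he51, he52, he53,
          hSTU1, hSTU2, hSTU3, hRST1, hRST2, hRST3]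
  · simp only [Category.assoc, reassoc_of% he51, reassoc_of% he41, reassoc_of% hRST1,
      reassoc_of% he31, reassoc_of% he21, reassoc_of% he11, reassoc_of% hSTU1,
      reassoc_of% he12, reassoc_of% he22, reassoc_of% he23, reassoc_of% hRST2,
      reassoc_of% hRST3, reassoc_of% he42, reassoc_of% he43, reassoc_of% hSTU2,
      reassoc_of% hSTU3, reassoc_of% he52, reassoc_of% he53, reassoc_of% he32,
          he11, he12, he21, he22, he23, he31, he32, he41, he42, he43, he51, he52, he53,
          hSTU1, hSTU2, hSTU3, hRST1, hRST2, hRST3]
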